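/- arXiv:1801.04593 — 2 statements merged into one kernel-verified Lean document; each statement's English description precedes it below -/
import Mathlib

section
/- Let P₁, P₂ be probability mass functions with the same support on a finite alphabet X, and let X₁^n ~ iid P₁ and X₂^n ~ iid P₂ be independent. Then the probability that log(P₂/P₁)(X₁^n) + log(P₁/P₂)(X₂^n) ≥ 0 is at most e^{−2n·B(P₁,P₂)}, where log(P/Q)(x^n) = ∑_{t=1}^n log(P(x_t)/Q(x_t)) and B is the Bhattacharyya distance. -/
/-!
Chernoff bound with parameter `1/2`: on the event, the log-likelihood ratio is nonnegative,
i.e. `P₁ⁿ(x) P₂ⁿ(y) ≤ P₂ⁿ(x) P₁ⁿ(y)`, so the weight `P₁ⁿ(x) P₂ⁿ(y)` is at most the geometric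
mean `√(P₁ⁿ(x) P₂ⁿ(x)) · √(P₁ⁿ(y) P₂ⁿ(y))`. Summed over all pairs of sequences this factorizes
into `(∑ₓ √(P₁(x) P₂(x)))^(2n) = e^{-2n·B(P₁,P₂)}`.
-/

open Finset Real

lemma le_sqrt_mul_of_le {a b : ℝ} (ha : 0 ≤ a) (hab : a ≤ b) : a ≤ √(a * b) :=
  le_sqrt_of_sq_le (by nlinarith)

lemma sum_log_div {ι : Type*} [Fintype ι] {p q : ι → ℝ} (hp : ∀ i, p i ≠ 0)
    (hq : ∀ i, q i ≠ 0) :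
    ∑ i, log (p i / q i) = log (∏ i, p i) - log (∏ i, q i) := by
  simp only [log_div (hp _) (hq _), sum_sub_distrib,
    log_prod (fun i _ => hp i), log_prod (fun i _ => hq i)]

lemma prod_mul_prod_le_sqrt_of_sum_log_div_nonneg {ι : Type*} [Fintype ι]
    {p₁ p₂ q₁ q₂ : ι → ℝ} (hp₁ : ∀ i, 0 < p₁ i) (hp₂ : ∀ i, 0 < p₂ i)
    (hq₁ : ∀ i, 0 < q₁ i) (hq₂ : ∀ i, 0 < q₂ i)
    (h : 0 ≤ ∑ i, log (p₂ i / p₁ i) + ∑ i, log (q₁ i / q₂ i)) :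
    (∏ i, p₁ i) * ∏ i, q₂ i ≤ (∏ i, √(p₁ i * p₂ i)) * ∏ i, √(q₁ i * q₂ i) := by
  have hA : 0 < ∏ i, p₁ i := prod_pos fun i _ => hp₁ i
  have hB : 0 < ∏ i, p₂ i := prod_pos fun i _ => hp₂ i
  have hC : 0 < ∏ i, q₁ i := prod_pos fun i _ => hq₁ i
  have hD : 0 < ∏ i, q₂ i := prod_pos fun i _ => hq₂ i
  rw [sum_log_div (fun i => (hp₂ i).ne') (fun i => (hp₁ i).ne'),
    sum_log_div (fun i => (hq₁ i).ne') (fun i => (hq₂ i).ne')] at h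
  have hlikelihood : (∏ i, p₁ i) * ∏ i, q₂ i ≤ (∏ i, p₂ i) * ∏ i, q₁ i := by
    rw [← log_le_log_iff (by positivity) (by positivity), log_mul hA.ne' hD.ne',
      log_mul hB.ne' hC.ne']
    linarith
  calc (∏ i, p₁ i) * ∏ i, q₂ i
      ≤ √(((∏ i, p₁ i) * ∏ i, q₂ i) * ((∏ i, p₂ i) * ∏ i, q₁ i)) :=
        le_sqrt_mul_of_le (by positivity) hlikelihood
    _ = (∏ i, √(p₁ i * p₂ i)) * ∏ i, √(q₁ i * q₂ i) := by
        rw [← sqrt_prod _ fun i _ => (mul_pos (hp₁ i) (hp₂ i)).le,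
          ← sqrt_prod _ fun i _ => (mul_pos (hq₁ i) (hq₂ i)).le, prod_mul_distrib,
          prod_mul_distrib, ← sqrt_mul (by positivity)]
        ring_nf

lemma pairwise_term_le {X ι : Type*} [Fintype ι] {P₁ P₂ : X → ℝ}
    (h1 : ∀ x, 0 ≤ P₁ x) (h2 : ∀ x, 0 ≤ P₂ x) (hsupp : ∀ x, P₁ x = 0 ↔ P₂ x = 0)
    (x y : ι → X) :
    (if 0 ≤ ∑ t, log (P₂ (x t) / P₁ (x t)) + ∑ t, log (P₁ (y t) / P₂ (y t))
      then (∏ t, P₁ (x t)) * ∏ t, P₂ (y t) else 0) ≤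
      (∏ t, √(P₁ (x t) * P₂ (x t))) * ∏ t, √(P₁ (y t) * P₂ (y t)) := by
  split_ifs with hevent
  -- If a factor of the weight vanishes, `log (_ / 0) = 0` makes the event meaningless,
  -- but the term is `0` anyway; otherwise `hsupp` makes all four factors positive.
  · by_cases hpos : (∀ t, P₁ (x t) ≠ 0) ∧ ∀ t, P₂ (y t) ≠ 0
    · obtain ⟨hx, hy⟩ := hpos
      exact prod_mul_prod_le_sqrt_of_sum_log_div_nonneg
        (fun t => (h1 _).lt_of_ne' (hx t))
        (fun t => (h2 _).lt_of_ne' fun h => hx t ((hsupp _).mpr h))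
        (fun t => (h1 _).lt_of_ne' fun h => hy t ((hsupp _).mp h))
        (fun t => (h2 _).lt_of_ne' (hy t)) hevent
    · have hzero : (∏ t, P₁ (x t)) * ∏ t, P₂ (y t) = 0 := by
        simp only [not_and_or, not_forall, not_not] at hpos
        rcases hpos with ⟨t, ht⟩ | ⟨t, ht⟩
        · exact mul_eq_zero_of_left (prod_eq_zero (mem_univ t) ht) _
        · exact mul_eq_zero_of_right _ (prod_eq_zero (mem_univ t) ht)
      rw [hzero]
      positivity
  · positivity

lemma sum_sqrt_mul_pos {X : Type*} [Fintype X] {P₁ P₂ : X → ℝ}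
    (h1 : ∀ x, 0 ≤ P₁ x) (h2 : ∀ x, 0 ≤ P₂ x) (hs1 : ∑ x, P₁ x = 1)
    (hsupp : ∀ x, P₂ x = 0 → P₁ x = 0) :
    0 < ∑ x, √(P₁ x * P₂ x) := by
  obtain ⟨x, -, hx⟩ := exists_ne_zero_of_sum_ne_zero (hs1 ▸ one_ne_zero)
  have hx₂ : 0 < P₂ x := (h2 x).lt_of_ne' (mt (hsupp x) hx)
  exact sum_pos' (fun _ _ => sqrt_nonneg _)
    ⟨x, mem_univ x, sqrt_pos.mpr (mul_pos ((h1 x).lt_of_ne' hx) hx₂)⟩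

lemma exp_neg_two_mul_neg_log {S : ℝ} (hS : 0 < S) (n : ℕ) :
    exp (-2 * (n : ℝ) * -log S) = S ^ (2 * n) := by
  rw [show -2 * (n : ℝ) * -log S = ((2 * n : ℕ) : ℝ) * log S by push_cast; ring,
    ← log_pow, exp_log (pow_pos hS _)]

theorem pairwise_error_le_general {X : Type} [Fintype X] (n : ℕ) (P₁ P₂ : X → ℝ)
    (h1 : ∀ x, 0 ≤ P₁ x) (h2 : ∀ x, 0 ≤ P₂ x)
    (hs1 : ∑ x, P₁ x = 1)
    (hsupp : ∀ x, P₁ x = 0 ↔ P₂ x = 0) :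
    (∑ x : Fin n → X, ∑ y : Fin n → X,
        if 0 ≤ (∑ t, Real.log (P₂ (x t) / P₁ (x t))) +
            (∑ t, Real.log (P₁ (y t) / P₂ (y t)))
        then (∏ t, P₁ (x t)) * (∏ t, P₂ (y t)) else 0) ≤
      Real.exp (-2 * (n : ℝ) * (-Real.log (∑ x, Real.sqrt (P₁ x * P₂ x)))) := by
  rw [exp_neg_two_mul_neg_log (sum_sqrt_mul_pos h1 h2 hs1 fun x => (hsupp x).mpr) n]
  calc _ ≤ ∑ x : Fin n → X, ∑ y : Fin n → X,
          (∏ t, √(P₁ (x t) * P₂ (x t))) * ∏ t, √(P₁ (y t) * P₂ (y t)) :=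
        sum_le_sum fun x _ => sum_le_sum fun y _ => pairwise_term_le h1 h2 hsupp x y
    _ = _ := by rw [← sum_mul_sum, ← Fintype.sum_pow (fun x => √(P₁ x * P₂ x)), ← pow_add, two_mul]

/-- Chernoff-type bound for the pairwise identification error: if `X₁ⁿ ~ iid P₁` and
`X₂ⁿ ~ iid P₂` are independent, then the probability (written as a sum over all pairs
of sequences, weighted by the product distribution) that
`log(P₂/P₁)(X₁ⁿ) + log(P₁/P₂)(X₂ⁿ) ≥ 0` is at most `e^{-2n·B(P₁,P₂)}`, where
`B(P₁,P₂) = -log ∑_x √(P₁(x)P₂(x))` is the Bhattacharyya distance. -/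
theorem pairwise_error_le {X : Type} [Fintype X] (n : ℕ) (P₁ P₂ : X → ℝ)
    (h1 : ∀ x, 0 ≤ P₁ x) (h2 : ∀ x, 0 ≤ P₂ x)
    (hs1 : ∑ x, P₁ x = 1) (hs2 : ∑ x, P₂ x = 1)
    (hsupp : ∀ x, P₁ x = 0 ↔ P₂ x = 0) :
    (∑ x : Fin n → X, ∑ y : Fin n → X,
        if 0 ≤ (∑ t, Real.log (P₂ (x t) / P₁ (x t))) +
            (∑ t, Real.log (P₁ (y t) / P₂ (y t)))
        then (∏ t, P₁ (x t)) * (∏ t, P₂ (y t)) else 0) ≤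
      Real.exp (-2 * (n : ℝ) * (-Real.log (∑ x, Real.sqrt (P₁ x * P₂ x)))) :=
  pairwise_error_le_general n P₁ P₂ h1 h2 hs1 hsupp
end

section
/- Let X₁^n, X₂^n, X₃^n be independent, with X_i^n ~ iid P_i for probability mass functions P₁,P₂,P₃ of common support on a finite alphabet. Then the probability of the joint event { log(P₁/P₂)(X₂^n)+log(P₂/P₁)(X₁^n) ≥ 0 } ∩ { log(P₁/P₃)(X₃^n)+log(P₃/P₁)(X₁^n) ≥ 0 } is at most exp(−n·B(P₁,P₂) − n·B(P₂,P₃) − n·B(P₁,P₃)). -/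
/-!
Chernoff bound with parameter `1/2`: on the joint event both log-likelihood sums are
nonnegative, so its indicator is at most `exp(L₁/2) · exp(L₂/2)`. After multiplying by the
product weight, every coordinate contributes a Bhattacharyya coefficient `√(P(a)Q(a))`
(the coordinate of `X₁ⁿ` appears in both events and contributes `√(P₂(a)P₃(a))`), and the
sum over the three sequences factors into `n`-th powers of `∑ₐ √(P(a)Q(a))`.
-/

open Real Finset

lemma exp_log_div_div_two {p q : ℝ} (hp : 0 < p) (hq : 0 < q) :
    exp (log (p / q) / 2) = √p / √q := by
  rw [← log_sqrt (div_pos hp hq).le, exp_log (sqrt_pos.mpr (div_pos hp hq)), sqrt_div hp.le]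

lemma mul_exp_log_div_div_two {p q : ℝ} (hp : 0 ≤ p) (hq : 0 ≤ q) (hpq : p = 0 ↔ q = 0) :
    q * exp (log (p / q) / 2) = √(p * q) := by
  rcases hq.eq_or_lt with rfl | hq
  · simp
  have hp : 0 < p := hp.lt_of_ne fun h => hq.ne' (hpq.mp h.symm)
  rw [exp_log_div_div_two hp hq, sqrt_mul hp.le]
  field_simp
  rw [sq_sqrt hq.le]

lemma mul_exp_log_div_div_two_mul {p q r : ℝ} (hp : 0 ≤ p) (hq : 0 ≤ q) (hr : 0 ≤ r)
    (hpq : p = 0 ↔ q = 0) (hpr : p = 0 ↔ r = 0) :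
    p * exp (log (q / p) / 2) * exp (log (r / p) / 2) = √(q * r) := by
  rcases hp.eq_or_lt with rfl | hp
  · simp [hpq.mp rfl]
  have hq : 0 < q := hq.lt_of_ne fun h => hp.ne' (hpq.mpr h.symm)
  have hr : 0 < r := hr.lt_of_ne fun h => hp.ne' (hpr.mpr h.symm)
  rw [exp_log_div_div_two hq hp, exp_log_div_div_two hr hp, sqrt_mul hq.le]
  field_simp
  rw [sq_sqrt hp.le]

lemma exp_sum_div_two {ι : Type*} (s : Finset ι) (f : ι → ℝ) :
    exp ((∑ i ∈ s, f i) / 2) = ∏ i ∈ s, exp (f i / 2) := by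
  rw [sum_div, exp_sum]

lemma ite_and_le_mul_exp_div_two {a b w : ℝ} (hw : 0 ≤ w) :
    (if 0 ≤ a ∧ 0 ≤ b then w else 0) ≤ w * exp (a / 2) * exp (b / 2) := by
  split_ifs with hab
  · have ha : 1 ≤ exp (a / 2) := one_le_exp (by linarith [hab.1])
    have hb : 1 ≤ exp (b / 2) := one_le_exp (by linarith [hab.2])
    calc w = w * 1 * 1 := by ring
      _ ≤ w * exp (a / 2) * exp (b / 2) := by gcongr
  · positivity

lemma pow_le_exp_mul_log {s : ℝ} (hs : 0 ≤ s) (n : ℕ) : s ^ n ≤ exp (n * log s) := by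
  rcases hs.eq_or_lt with rfl | hs
  · rcases n with _ | n <;> simp
  · rw [exp_nat_mul, exp_log hs]

lemma joint_error_term_le {X : Type} {n : ℕ} {P₁ P₂ P₃ : X → ℝ}
    (h1 : ∀ x, 0 ≤ P₁ x) (h2 : ∀ x, 0 ≤ P₂ x) (h3 : ∀ x, 0 ≤ P₃ x)
    (hsupp12 : ∀ x, P₁ x = 0 ↔ P₂ x = 0) (hsupp13 : ∀ x, P₁ x = 0 ↔ P₃ x = 0)
    (x y z : Fin n → X) :
    (if 0 ≤ (∑ t, log (P₁ (y t) / P₂ (y t))) + (∑ t, log (P₂ (x t) / P₁ (x t))) ∧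
        0 ≤ (∑ t, log (P₁ (z t) / P₃ (z t))) + (∑ t, log (P₃ (x t) / P₁ (x t)))
      then (∏ t, P₁ (x t)) * (∏ t, P₂ (y t)) * (∏ t, P₃ (z t)) else 0) ≤
      (∏ t, √(P₂ (x t) * P₃ (x t))) * (∏ t, √(P₁ (y t) * P₂ (y t))) *
        (∏ t, √(P₁ (z t) * P₃ (z t))) := by
  have hw : 0 ≤ (∏ t, P₁ (x t)) * (∏ t, P₂ (y t)) * (∏ t, P₃ (z t)) :=
    mul_nonneg (mul_nonneg (prod_nonneg fun t _ => h1 _) (prod_nonneg fun t _ => h2 _))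
      (prod_nonneg fun t _ => h3 _)
  refine (ite_and_le_mul_exp_div_two hw).trans_eq ?_
  simp only [← mul_exp_log_div_div_two_mul (h1 _) (h2 _) (h3 _) (hsupp12 _) (hsupp13 _),
    ← mul_exp_log_div_div_two (h1 _) (h2 _) (hsupp12 _),
    ← mul_exp_log_div_div_two (h1 _) (h3 _) (hsupp13 _),
    add_div, exp_add, exp_sum_div_two, prod_mul_distrib]
  ring

theorem joint_pairwise_error_le_general {X : Type} [Fintype X] (n : ℕ) (P₁ P₂ P₃ : X → ℝ)
    (h1 : ∀ x, 0 ≤ P₁ x) (h2 : ∀ x, 0 ≤ P₂ x) (h3 : ∀ x, 0 ≤ P₃ x)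
    (hsupp12 : ∀ x, P₁ x = 0 ↔ P₂ x = 0) (hsupp13 : ∀ x, P₁ x = 0 ↔ P₃ x = 0) :
    (∑ x : Fin n → X, ∑ y : Fin n → X, ∑ z : Fin n → X,
        if 0 ≤ (∑ t, Real.log (P₁ (y t) / P₂ (y t))) +
              (∑ t, Real.log (P₂ (x t) / P₁ (x t))) ∧
           0 ≤ (∑ t, Real.log (P₁ (z t) / P₃ (z t))) +
              (∑ t, Real.log (P₃ (x t) / P₁ (x t)))
        then (∏ t, P₁ (x t)) * (∏ t, P₂ (y t)) * (∏ t, P₃ (z t)) else 0) ≤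
      Real.exp (-(n : ℝ) * (-Real.log (∑ x, Real.sqrt (P₁ x * P₂ x)))
        - (n : ℝ) * (-Real.log (∑ x, Real.sqrt (P₂ x * P₃ x)))
        - (n : ℝ) * (-Real.log (∑ x, Real.sqrt (P₁ x * P₃ x)))) := by
  set S₁₂ := ∑ x, √(P₁ x * P₂ x)
  set S₂₃ := ∑ x, √(P₂ x * P₃ x)
  set S₁₃ := ∑ x, √(P₁ x * P₃ x)
  have hS₁₂ : 0 ≤ S₁₂ := by positivity
  have hS₂₃ : 0 ≤ S₂₃ := by positivity
  have hS₁₃ : 0 ≤ S₁₃ := by positivity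
  calc _ ≤ ∑ x : Fin n → X, ∑ y : Fin n → X, ∑ z : Fin n → X,
          (∏ t, √(P₂ (x t) * P₃ (x t))) * (∏ t, √(P₁ (y t) * P₂ (y t))) *
            (∏ t, √(P₁ (z t) * P₃ (z t))) :=
        sum_le_sum fun x _ => sum_le_sum fun y _ => sum_le_sum fun z _ =>
          joint_error_term_le h1 h2 h3 hsupp12 hsupp13 x y z
    _ = S₁₂ ^ n * S₂₃ ^ n * S₁₃ ^ n := by
        simp only [S₁₂, S₂₃, S₁₃, Fintype.sum_pow, ← mul_sum, ← sum_mul]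
        ring
    _ ≤ exp (n * log S₁₂) * exp (n * log S₂₃) * exp (n * log S₁₃) := by
        gcongr
        exacts [pow_le_exp_mul_log hS₁₂ n, pow_le_exp_mul_log hS₂₃ n, pow_le_exp_mul_log hS₁₃ n]
    _ = _ := by
        rw [← exp_add, ← exp_add]
        congr 1
        ring

/-- Bound on the probability of two overlapping pairwise error events: with
`X₁ⁿ ~ iid P₁`, `X₂ⁿ ~ iid P₂`, `X₃ⁿ ~ iid P₃` independent, the probability (a sum
over triples of sequences weighted by the product distribution) of the joint event
`{log(P₁/P₂)(X₂ⁿ) + log(P₂/P₁)(X₁ⁿ) ≥ 0} ∩ {log(P₁/P₃)(X₃ⁿ) + log(P₃/P₁)(X₁ⁿ) ≥ 0}`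
is at most `exp(-n·B(P₁,P₂) - n·B(P₂,P₃) - n·B(P₁,P₃))`, where `B` is the
Bhattacharyya distance `B(P,Q) = -log ∑_x √(P(x)Q(x))`. -/
theorem joint_pairwise_error_le {X : Type} [Fintype X] (n : ℕ) (P₁ P₂ P₃ : X → ℝ)
    (h1 : ∀ x, 0 ≤ P₁ x) (h2 : ∀ x, 0 ≤ P₂ x) (h3 : ∀ x, 0 ≤ P₃ x)
    (hs1 : ∑ x, P₁ x = 1) (hs2 : ∑ x, P₂ x = 1) (hs3 : ∑ x, P₃ x = 1)
    (hsupp12 : ∀ x, P₁ x = 0 ↔ P₂ x = 0) (hsupp13 : ∀ x, P₁ x = 0 ↔ P₃ x = 0) :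
    (∑ x : Fin n → X, ∑ y : Fin n → X, ∑ z : Fin n → X,
        if 0 ≤ (∑ t, Real.log (P₁ (y t) / P₂ (y t))) +
              (∑ t, Real.log (P₂ (x t) / P₁ (x t))) ∧
           0 ≤ (∑ t, Real.log (P₁ (z t) / P₃ (z t))) +
              (∑ t, Real.log (P₃ (x t) / P₁ (x t)))
        then (∏ t, P₁ (x t)) * (∏ t, P₂ (y t)) * (∏ t, P₃ (z t)) else 0) ≤
      Real.exp (-(n : ℝ) * (-Real.log (∑ x, Real.sqrt (P₁ x * P₂ x)))
        - (n : ℝ) * (-Real.log (∑ x, Real.sqrt (P₂ x * P₃ x)))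
        - (n : ℝ) * (-Real.log (∑ x, Real.sqrt (P₁ x * P₃ x)))) :=
  joint_pairwise_error_le_general n P₁ P₂ P₃ h1 h2 h3 hsupp12 hsupp13
end
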